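/- arXiv:1107.3799 — 4 statements merged into one kernel-verified Lean document; each statement's English description precedes it below -/
import Mathlib

section
/- Let K₀ be a compact Hausdorff space and φ₀ : K₀ → X a continuous surjection onto a compact Hausdorff space X. If A ⊆ X is such that φ₀⁻¹(A) is a CBP set in K₀, then A is a CBP set in X. -/
open Topology Filter Set

/-- A set has the Baire property iff it differs from an open set by a meager set. -/
def HasBP {X : Type*} [TopologicalSpace X] (A : Set X) : Prop :=
  ∃ U : Set X, IsOpen U ∧ IsMeagre (symmDiff A U)

/-- A set is CBP iff its preimage under every continuous map from a compact
Hausdorff space has the Baire property. -/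
def IsCBP {X : Type u} [TopologicalSpace X] (A : Set X) : Prop :=
  ∀ (K : Type u) [TopologicalSpace K] [CompactSpace K] [T2Space K]
    (φ : K → X), Continuous φ → HasBP (φ ⁻¹' A)

/-- A map is CBP measurable iff preimages of open sets are CBP sets. -/
def CBPMeasurable {X : Type u} {Y : Type*} [TopologicalSpace X] [TopologicalSpace Y]
    (f : X → Y) : Prop :=
  ∀ U : Set Y, IsOpen U → IsCBP (f ⁻¹' U)

/-!
Given `φ : K → X`, pull `φ₀` back along `φ` and shrink the fibre product, by Gleason's Zorn
argument, to a compact set `E` whose projection `g : E → K` is still onto but maps no proper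
closed subset onto `K`. Such an irreducible map sends closed nowhere dense sets to nowhere dense
sets, hence meagre sets to meagre sets, so the Baire property of `g ⁻¹' (φ ⁻¹' A)`, which is the
preimage of `φ₀ ⁻¹' A` under the other projection `E → K₀`, descends to `φ ⁻¹' A`.
-/

section ZornSubset

variable {M K : Type*} [TopologicalSpace M] [TopologicalSpace K] {g : M → K}

lemma IsNowhereDense.image_of_zorn_subset (hg : Continuous g) (hg_closed : IsClosedMap g)
    (hg_surj : g.Surjective)
    (zorn_subset : ∀ E₀ : Set M, E₀ ≠ univ → IsClosed E₀ → g '' E₀ ≠ univ)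
    {N : Set M} (hN_closed : IsClosed N) (hN : IsNowhereDense N) :
    IsNowhereDense (g '' N) := by
  rw [(hg_closed N hN_closed).isNowhereDense_iff, ← not_nonempty_iff_eq_empty]
  rintro ⟨x₀, hx₀⟩
  set W := interior (g '' N)
  have hO_open : IsOpen (g ⁻¹' W \ N) := (isOpen_interior.preimage hg).sdiff hN_closed
  have hO_nonempty : (g ⁻¹' W \ N).Nonempty := by
    obtain ⟨m₀, rfl⟩ := hg_surj x₀
    by_contra! hO_empty
    have hWN : g ⁻¹' W ⊆ interior N :=
      (isOpen_interior.preimage hg).subset_interior_iff.2 (sdiff_eq_empty.1 hO_empty)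
    rw [hN_closed.isNowhereDense_iff.1 hN] at hWN
    exact hWN hx₀
  -- A point `x` off `g '' (g ⁻¹' W \ N)ᶜ` has its whole fibre in `g ⁻¹' W \ N`,
  -- yet `x ∈ W ⊆ g '' N` has a preimage in `N`.
  obtain ⟨x, hx⟩ := nonempty_compl.2 <|
    zorn_subset _ (compl_ne_univ.2 hO_nonempty) hO_open.isClosed_compl
  obtain ⟨m, rfl⟩ := hg_surj x
  have hm : m ∈ g ⁻¹' W \ N := not_not.1 fun hm ↦ hx ⟨m, hm, rfl⟩
  obtain ⟨n, hn, hnm⟩ := interior_subset hm.1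
  exact hx ⟨n, fun h ↦ h.2 hn, hnm⟩

lemma IsMeagre.image_of_zorn_subset (hg : Continuous g) (hg_closed : IsClosedMap g)
    (hg_surj : g.Surjective)
    (zorn_subset : ∀ E₀ : Set M, E₀ ≠ univ → IsClosed E₀ → g '' E₀ ≠ univ)
    {S : Set M} (hS : IsMeagre S) : IsMeagre (g '' S) := by
  rw [isMeagre_iff_countable_union_isNowhereDense] at hS ⊢
  obtain ⟨T, hT, hT_countable, hST⟩ := hS
  refine ⟨(fun t ↦ g '' closure t) '' T, ?_, hT_countable.image _, ?_⟩
  · rintro _ ⟨t, ht, rfl⟩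
    exact (hT t ht).closure.image_of_zorn_subset hg hg_closed hg_surj zorn_subset
      isClosed_closure
  · rw [sUnion_image, ← image_iUnion₂]
    exact image_mono <| hST.trans <| sUnion_subset fun t ht ↦
      subset_closure.trans (subset_biUnion_of_mem (u := closure) ht)

end ZornSubset

lemma symmDiff_compl_image_compl_subset_image_symmDiff {M K : Type*} {g : M → K}
    (hg_surj : g.Surjective) (B : Set K) (V : Set M) :
    symmDiff B (g '' Vᶜ)ᶜ ⊆ g '' symmDiff (g ⁻¹' B) V := by
  rintro x (⟨hxB, hx⟩ | ⟨hx, hxB⟩)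
  · obtain ⟨m, hmV, rfl⟩ := not_not.1 hx
    exact ⟨m, Or.inl ⟨hxB, hmV⟩, rfl⟩
  · obtain ⟨m, rfl⟩ := hg_surj x
    exact ⟨m, Or.inr ⟨not_not.1 fun hmV ↦ hx ⟨m, hmV, rfl⟩, hxB⟩, rfl⟩

lemma HasBP.of_preimage_of_zorn_subset {M K : Type*} [TopologicalSpace M] [TopologicalSpace K]
    {g : M → K} (hg : Continuous g) (hg_closed : IsClosedMap g) (hg_surj : g.Surjective)
    (zorn_subset : ∀ E₀ : Set M, E₀ ≠ univ → IsClosed E₀ → g '' E₀ ≠ univ)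
    {B : Set K} (hB : HasBP (g ⁻¹' B)) : HasBP B := by
  obtain ⟨V, hV, hV_meagre⟩ := hB
  exact ⟨(g '' Vᶜ)ᶜ, (hg_closed _ hV.isClosed_compl).isOpen_compl,
    (hV_meagre.image_of_zorn_subset hg hg_closed hg_surj zorn_subset).mono
      (symmDiff_compl_image_compl_subset_image_symmDiff hg_surj B V)⟩

lemma Function.Pullback.fst_surjective {K K₀ X : Type*} {φ : K → X} {φ₀ : K₀ → X}
    (hφ₀ : φ₀.Surjective) : (@Pullback.fst K X K₀ φ φ₀).Surjective := fun k ↦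
  let ⟨k₀, hk₀⟩ := hφ₀ (φ k)
  ⟨⟨(k, k₀), hk₀.symm⟩, rfl⟩

section Pullback

variable {K K₀ X : Type*} [TopologicalSpace K] [TopologicalSpace K₀] {φ : K → X} {φ₀ : K₀ → X}

lemma Function.Pullback.continuous_fst : Continuous (@Pullback.fst K X K₀ φ φ₀) :=
  _root_.continuous_fst.comp continuous_subtype_val

lemma Function.Pullback.continuous_snd : Continuous (@Pullback.snd K X K₀ φ φ₀) :=
  _root_.continuous_snd.comp continuous_subtype_val

lemma Function.Pullback.compactSpace [TopologicalSpace X] [T2Space X] [CompactSpace K]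
    [CompactSpace K₀] (hφ : Continuous φ) (hφ₀ : Continuous φ₀) : CompactSpace (φ.Pullback φ₀) :=
  isCompact_iff_compactSpace.1 <| IsClosed.isCompact (s := {p : K × K₀ | φ p.1 = φ₀ p.2}) <|
    isClosed_eq (hφ.comp _root_.continuous_fst) (hφ₀.comp _root_.continuous_snd)

end Pullback

theorem isCBP_of_preimage_quotient_general {K₀ X : Type u}
    [TopologicalSpace K₀] [CompactSpace K₀] [T2Space K₀]
    [TopologicalSpace X] [T2Space X]
    (φ₀ : K₀ → X) (hc : Continuous φ₀) (hs : Function.Surjective φ₀)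
    (A : Set X) (hA : IsCBP (φ₀ ⁻¹' A)) : IsCBP A := by
  intro K _ _ _ φ hφ
  have := Function.Pullback.compactSpace hφ hc
  obtain ⟨E, hE, hE_onto, zorn_subset⟩ := exists_compact_surjective_zorn_subset
    Function.Pullback.continuous_fst (Function.Pullback.fst_surjective (φ := φ) hs)
  set g := E.domRestrict Function.Pullback.fst
  set ψ := E.domRestrict Function.Pullback.snd
  have hg : Continuous g := Function.Pullback.continuous_fst.comp continuous_subtype_val
  have hg_surj : g.Surjective := by
    rw [← range_eq_univ, range_domRestrict, hE_onto]
  have hψ : Continuous ψ := Function.Pullback.continuous_snd.comp continuous_subtype_val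
  have h_square : ψ ⁻¹' (φ₀ ⁻¹' A) = g ⁻¹' (φ ⁻¹' A) := by
    ext e
    simp only [g, ψ, mem_preimage, domRestrict_apply, Function.Pullback.fst,
      Function.Pullback.snd, e.1.2]
  refine HasBP.of_preimage_of_zorn_subset hg hg.isClosedMap hg_surj zorn_subset ?_
  exact h_square ▸ hA E ψ hψ

/-- Fremlin: if `φ₀ : K₀ → X` is a continuous surjection from a compact
Hausdorff space onto a compact Hausdorff space and `φ₀ ⁻¹' A` is a CBP set in `K₀`,
then `A` is a CBP set in `X`. -/
theorem isCBP_of_preimage_quotient {K₀ X : Type u}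
    [TopologicalSpace K₀] [CompactSpace K₀] [T2Space K₀]
    [TopologicalSpace X] [CompactSpace X] [T2Space X]
    (φ₀ : K₀ → X) (hc : Continuous φ₀) (hs : Function.Surjective φ₀)
    (A : Set X) (hA : IsCBP (φ₀ ⁻¹' A)) : IsCBP A :=
  isCBP_of_preimage_quotient_general φ₀ hc hs A hA
end

section
/- Let π : K → L be an irreducible continuous surjection between compact Hausdorff spaces. If A ⊆ K has the Baire property in K, then π(A) has the Baire property in L. -/
open Topology Filter Set

/-!
If `A` differs from the open set `U` by a meagre set, then `π '' A` differs from the open set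
`(π '' Uᶜ)ᶜ` by a subset of `π '' (A ∆ U) ∪ (π '' closure U ∩ π '' Uᶜ)`. Irreducibility is what
makes both pieces small: an open set `V ⊆ π '' F`, with `F` closed, has `π ⁻¹' V ⊆ F`. Hence
`π` maps closed nowhere dense sets to closed nowhere dense sets (so meagre sets to meagre sets),
and the interior of `π '' closure U ∩ π '' Uᶜ` pulls back into the frontier of `U`, which has
empty interior.
-/

section Irreducible

variable {K L : Type*} [TopologicalSpace K] [TopologicalSpace L] {π : K → L}

theorem preimage_subset_of_subset_image_of_irreducible (hc : Continuous π)
    (hs : Function.Surjective π)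
    (hirr : ∀ F : Set K, IsClosed F → F ≠ Set.univ → π '' F ≠ Set.univ)
    {F : Set K} (hF : IsClosed F) {V : Set L} (hV : IsOpen V) (hVF : V ⊆ π '' F) :
    π ⁻¹' V ⊆ F := by
  intro x hxV
  by_contra hxF
  -- `F ∪ π ⁻¹' Vᶜ` is a proper closed subset (it misses `x`) mapping onto `L`.
  refine hirr (F ∪ π ⁻¹' Vᶜ) (hF.union (hV.isClosed_compl.preimage hc)) ?_ ?_
  · exact fun h => (h.symm ▸ mem_univ x : x ∈ F ∪ π ⁻¹' Vᶜ).elim hxF (· hxV)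
  · rw [image_union, image_preimage_eq _ hs]
    exact eq_univ_of_subset (union_subset_union_left _ hVF) (union_compl_self V)

theorem interior_image_inter_image_subset_of_irreducible (hc : Continuous π)
    (hs : Function.Surjective π)
    (hirr : ∀ F : Set K, IsClosed F → F ≠ Set.univ → π '' F ≠ Set.univ)
    {F G : Set K} (hF : IsClosed F) (hG : IsClosed G) :
    interior (π '' F ∩ π '' G) ⊆ π '' interior (F ∩ G) := by
  have hpre : π ⁻¹' interior (π '' F ∩ π '' G) ⊆ F ∩ G :=
    subset_inter
      (preimage_subset_of_subset_image_of_irreducible hc hs hirr hF isOpen_interior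
        (interior_subset.trans inter_subset_left))
      (preimage_subset_of_subset_image_of_irreducible hc hs hirr hG isOpen_interior
        (interior_subset.trans inter_subset_right))
  calc interior (π '' F ∩ π '' G) = π '' (π ⁻¹' interior (π '' F ∩ π '' G)) :=
        (image_preimage_eq _ hs).symm
    _ ⊆ π '' interior (F ∩ G) :=
        image_mono (interior_maximal hpre (isOpen_interior.preimage hc))

variable [CompactSpace K] [T2Space L]

theorem isNowhereDense_image_inter_image_of_irreducible (hc : Continuous π)
    (hs : Function.Surjective π)
    (hirr : ∀ F : Set K, IsClosed F → F ≠ Set.univ → π '' F ≠ Set.univ)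
    {F G : Set K} (hF : IsClosed F) (hG : IsClosed G) (hFG : IsNowhereDense (F ∩ G)) :
    IsNowhereDense (π '' F ∩ π '' G) := by
  rw [((hc.isClosedMap F hF).inter (hc.isClosedMap G hG)).isNowhereDense_iff,
    ← subset_empty_iff]
  rw [(hF.inter hG).isNowhereDense_iff] at hFG
  simpa [hFG] using interior_image_inter_image_subset_of_irreducible hc hs hirr hF hG

theorem IsNowhereDense.image_of_irreducible (hc : Continuous π) (hs : Function.Surjective π)
    (hirr : ∀ F : Set K, IsClosed F → F ≠ Set.univ → π '' F ≠ Set.univ)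
    {N : Set K} (hN : IsNowhereDense N) : IsNowhereDense (π '' N) := by
  have h := isNowhereDense_image_inter_image_of_irreducible hc hs hirr
    (isClosed_closure (s := N)) isClosed_closure (by rw [inter_self]; exact hN.closure)
  rw [inter_self] at h
  exact h.mono (image_mono subset_closure)

theorem IsMeagre.image_of_irreducible (hc : Continuous π) (hs : Function.Surjective π)
    (hirr : ∀ F : Set K, IsClosed F → F ≠ Set.univ → π '' F ≠ Set.univ)
    {M : Set K} (hM : IsMeagre M) : IsMeagre (π '' M) := by
  rw [isMeagre_iff_countable_union_isNowhereDense] at hM ⊢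
  obtain ⟨S, hS, hScount, hMS⟩ := hM
  refine ⟨image π '' S, forall_mem_image.2 fun N hN => (hS N hN).image_of_irreducible hc hs hirr,
    hScount.image _, ?_⟩
  rw [← image_sUnion]
  exact image_mono hMS

end Irreducible

theorem symmDiff_image_compl_image_compl_subset {K L : Type*} {π : K → L}
    (hs : Function.Surjective π) (A U : Set K) :
    symmDiff (π '' A) (π '' Uᶜ)ᶜ ⊆ (π '' U ∩ π '' Uᶜ) ∪ π '' symmDiff A U := by
  rintro y (⟨⟨x, hxA, rfl⟩, hy⟩ | ⟨hy, hyA⟩)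
  · by_cases hxU : x ∈ U
    · exact Or.inl ⟨mem_image_of_mem π hxU, not_not.1 hy⟩
    · exact Or.inr ⟨x, Or.inl ⟨hxA, hxU⟩, rfl⟩
  · obtain ⟨x, rfl⟩ := hs y
    have hxU : x ∈ U := by_contra fun hxU => hy ⟨x, hxU, rfl⟩
    exact Or.inr ⟨x, Or.inr ⟨hxU, fun hxA => hyA ⟨x, hxA, rfl⟩⟩, rfl⟩

theorem image_hasBP_of_irreducible_general {K L : Type*}
    [TopologicalSpace K] [CompactSpace K]
    [TopologicalSpace L] [T2Space L]
    (π : K → L) (hc : Continuous π) (hs : Function.Surjective π)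
    (hirr : ∀ F : Set K, IsClosed F → F ≠ Set.univ → π '' F ≠ Set.univ)
    (A : Set K) (hA : HasBP A) : HasBP (π '' A) := by
  obtain ⟨U, hU, hAU⟩ := hA
  refine ⟨(π '' Uᶜ)ᶜ, (hc.isClosedMap _ hU.isClosed_compl).isOpen_compl, ?_⟩
  have hfrontier : IsNowhereDense (closure U ∩ Uᶜ) := by
    rw [← hU.isClosed_compl.closure_eq, ← frontier_eq_closure_inter_closure,
      isClosed_frontier.isNowhereDense_iff, ← frontier_compl]
    exact interior_frontier hU.isClosed_compl
  have hD : IsNowhereDense (π '' closure U ∩ π '' Uᶜ) :=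
    isNowhereDense_image_inter_image_of_irreducible hc hs hirr isClosed_closure
      hU.isClosed_compl hfrontier
  refine (hD.isMeagre.union (hAU.image_of_irreducible hc hs hirr)).mono ?_
  refine (symmDiff_image_compl_image_compl_subset hs A U).trans ?_
  gcongr
  exact subset_closure

/-- an irreducible continuous surjection between compact Hausdorff spaces
maps sets with the Baire property to sets with the Baire property. -/
theorem image_hasBP_of_irreducible {K L : Type*}
    [TopologicalSpace K] [CompactSpace K] [T2Space K]
    [TopologicalSpace L] [CompactSpace L] [T2Space L]
    (π : K → L) (hc : Continuous π) (hs : Function.Surjective π)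
    (hirr : ∀ F : Set K, IsClosed F → F ≠ Set.univ → π '' F ≠ Set.univ)
    (A : Set K) (hA : HasBP A) : HasBP (π '' A) :=
  image_hasBP_of_irreducible_general π hc hs hirr A hA
end

section
/- Let G be a topological group and d a bounded pseudometric on G. Then d is uniformly continuous on G × G with respect to the right uniformity of G if and only if there exists a right-invariant continuous pseudometric d' on G with d ≤ d'. -/
open Topology Filter Set

/-! For the forward direction, take `d' x y = ⨆ z, d (x z) (y z)`: boundedness of `d` makes the
supremum finite, and it is right-invariant and dominates `d` by construction. The uniform estimate
on `d` holds uniformly along right translates, so it passes to the supremum and yields continuity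
of `d'`. Conversely, `|d x y - d x' y'| ≤ d x x' + d y y' ≤ d' (x x'⁻¹) 1 + d' (y y'⁻¹) 1`, which
is small when `x x'⁻¹` and `y y'⁻¹` lie in a small neighbourhood of `1`. -/

/-- `ρ` is a right-invariant continuous pseudometric on the topological group `G`. -/
structure IsRICPseudometric (G : Type*) [Group G] [TopologicalSpace G]
    (ρ : G → G → ℝ) : Prop where
  refl : ∀ x, ρ x x = 0
  symm : ∀ x y, ρ x y = ρ y x
  triangle : ∀ x y z, ρ x z ≤ ρ x y + ρ y z
  right_invariant : ∀ x y z, ρ x y = ρ (x * z) (y * z)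
  continuous : Continuous fun p : G × G => ρ p.1 p.2

/-- The uniform continuity of `d` on `G × G` for the right uniformity of `G`. -/
def RightUniformContinuous₂ {G : Type*} [Group G] [TopologicalSpace G] (d : G → G → ℝ) : Prop :=
  ∀ ε : ℝ, 0 < ε → ∃ V ∈ 𝓝 (1 : G), ∀ x x' y y' : G,
    x * x'⁻¹ ∈ V → y * y'⁻¹ ∈ V → |d x y - d x' y'| ≤ ε

lemma abs_sub_le_add_of_triangle {α : Type*} {d : α → α → ℝ} (hsymm : ∀ x y, d x y = d y x)
    (htri : ∀ x y z, d x z ≤ d x y + d y z) (x x' y y' : α) :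
    |d x y - d x' y'| ≤ d x x' + d y y' := by
  rw [abs_sub_le_iff]
  constructor
  · linarith [htri x x' y, htri x' y' y, hsymm y' y]
  · linarith [htri x' x y', htri x y y', hsymm x' x]

namespace IsRICPseudometric

variable {G : Type*} [Group G] [TopologicalSpace G] {ρ : G → G → ℝ}

lemma apply_eq_apply_mul_inv_one (hρ : IsRICPseudometric G ρ) (x y : G) :
    ρ x y = ρ (x * y⁻¹) 1 := by
  rw [hρ.right_invariant (x * y⁻¹) 1 y, inv_mul_cancel_right, one_mul]

lemma setOf_apply_one_lt_mem_nhds (hρ : IsRICPseudometric G ρ) {ε : ℝ} (hε : 0 < ε) :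
    {a | ρ a 1 < ε} ∈ 𝓝 (1 : G) := by
  have hcont : Continuous fun a : G => ρ a 1 :=
    hρ.continuous.comp (continuous_id.prodMk continuous_const)
  exact hcont.continuousAt.preimage_mem_nhds (Iio_mem_nhds (by rwa [hρ.refl]))

end IsRICPseudometric

lemma rightUniformContinuous₂_of_le {G : Type*} [Group G] [TopologicalSpace G]
    {d d' : G → G → ℝ} (hsymm : ∀ x y, d x y = d y x) (htri : ∀ x y z, d x z ≤ d x y + d y z)
    (hd' : IsRICPseudometric G d') (hle : ∀ x y, d x y ≤ d' x y) :
    RightUniformContinuous₂ d := by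
  intro ε hε
  refine ⟨_, hd'.setOf_apply_one_lt_mem_nhds (half_pos hε), fun x x' y y' hx hy => ?_⟩
  rw [mem_ofPred_eq, ← hd'.apply_eq_apply_mul_inv_one] at hx hy
  linarith [abs_sub_le_add_of_triangle hsymm htri x x' y y', hle x x', hle y y']

section RightInvariantSup

variable {G : Type*} [Group G]

/-- For bounded `d`, the smallest right-invariant function dominating `d`. -/
noncomputable def rightInvariantSup (d : G → G → ℝ) (x y : G) : ℝ :=
  ⨆ z, d (x * z) (y * z)

variable {d : G → G → ℝ} {C : ℝ}

lemma le_rightInvariantSup (hC : ∀ x y, d x y ≤ C) (x y z : G) :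
    d (x * z) (y * z) ≤ rightInvariantSup d x y :=
  le_ciSup (f := fun w => d (x * w) (y * w)) ⟨C, by rintro _ ⟨w, rfl⟩; exact hC _ _⟩ z

lemma le_rightInvariantSup_self (hC : ∀ x y, d x y ≤ C) (x y : G) :
    d x y ≤ rightInvariantSup d x y := by
  simpa using le_rightInvariantSup hC x y 1

lemma rightInvariantSup_le {x y : G} {a : ℝ} (h : ∀ z, d (x * z) (y * z) ≤ a) :
    rightInvariantSup d x y ≤ a :=
  ciSup_le h

lemma rightInvariantSup_self (hrefl : ∀ x, d x x = 0) (x : G) : rightInvariantSup d x x = 0 := by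
  simp [rightInvariantSup, hrefl]

lemma rightInvariantSup_comm (hsymm : ∀ x y, d x y = d y x) (x y : G) :
    rightInvariantSup d x y = rightInvariantSup d y x :=
  iSup_congr fun _ => hsymm _ _

lemma rightInvariantSup_triangle (hC : ∀ x y, d x y ≤ C)
    (htri : ∀ x y z, d x z ≤ d x y + d y z) (x y z : G) :
    rightInvariantSup d x z ≤ rightInvariantSup d x y + rightInvariantSup d y z :=
  rightInvariantSup_le fun w => (htri _ (y * w) _).trans <|
    add_le_add (le_rightInvariantSup hC x y w) (le_rightInvariantSup hC y z w)

lemma rightInvariantSup_mul_right (x y z : G) :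
    rightInvariantSup d (x * z) (y * z) = rightInvariantSup d x y := by
  simp only [rightInvariantSup, mul_assoc]
  exact (Equiv.mulLeft z).iSup_comp (g := fun w => d (x * w) (y * w))

lemma abs_rightInvariantSup_sub_le (hC : ∀ x y, d x y ≤ C) {x x' y y' : G} {ε : ℝ}
    (h : ∀ z, |d (x * z) (y * z) - d (x' * z) (y' * z)| ≤ ε) :
    |rightInvariantSup d x y - rightInvariantSup d x' y'| ≤ ε := by
  rw [abs_sub_le_iff]
  constructor <;> rw [sub_le_iff_le_add] <;> refine rightInvariantSup_le fun z => ?_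
  · linarith [(abs_sub_le_iff.1 (h z)).1, le_rightInvariantSup hC x' y' z]
  · linarith [(abs_sub_le_iff.1 (h z)).2, le_rightInvariantSup hC x y z]

variable [TopologicalSpace G] [IsTopologicalGroup G]

lemma RightUniformContinuous₂.continuous_rightInvariantSup (hd : RightUniformContinuous₂ d)
    (hC : ∀ x y, d x y ≤ C) : Continuous fun p : G × G => rightInvariantSup d p.1 p.2 := by
  refine continuous_iff_continuousAt.2 fun p₀ => Metric.tendsto_nhds.2 fun ε hε => ?_
  obtain ⟨V, hV, hVε⟩ := hd (ε / 2) (half_pos hε)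
  have hshift : Tendsto (fun p : G × G => (p.1 * p₀.1⁻¹, p.2 * p₀.2⁻¹)) (𝓝 p₀) (𝓝 (1, 1)) := by
    have := (((continuous_fst.mul continuous_const).prodMk
      (continuous_snd.mul continuous_const)).tendsto p₀ :
        Tendsto (fun p : G × G => (p.1 * p₀.1⁻¹, p.2 * p₀.2⁻¹)) _ _)
    simpa using this
  filter_upwards [hshift (prod_mem_nhds hV hV)] with p ⟨hx, hy⟩
  -- right translation by `z` does not change `x * x'⁻¹`, so the estimate holds for every translate
  have hclose : |rightInvariantSup d p.1 p.2 - rightInvariantSup d p₀.1 p₀.2| ≤ ε / 2 :=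
    abs_rightInvariantSup_sub_le hC fun z => hVε _ _ _ _
      (by rwa [mul_inv_rev, mul_assoc, mul_inv_cancel_left])
      (by rwa [mul_inv_rev, mul_assoc, mul_inv_cancel_left])
  rw [Real.dist_eq]
  linarith

lemma RightUniformContinuous₂.isRICPseudometric_rightInvariantSup
    (hd : RightUniformContinuous₂ d) (hrefl : ∀ x, d x x = 0) (hsymm : ∀ x y, d x y = d y x)
    (htri : ∀ x y z, d x z ≤ d x y + d y z) (hC : ∀ x y, d x y ≤ C) :
    IsRICPseudometric G (rightInvariantSup d) where
  refl := rightInvariantSup_self hrefl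
  symm := rightInvariantSup_comm hsymm
  triangle := rightInvariantSup_triangle hC htri
  right_invariant x y z := (rightInvariantSup_mul_right x y z).symm
  continuous := hd.continuous_rightInvariantSup hC

end RightInvariantSup

/-- a bounded pseudometric on a topological group is uniformly continuous
with respect to the right uniformity iff it is dominated by a right-invariant continuous
pseudometric. -/
theorem bounded_pseudometric_unifCont_iff {G : Type*} [Group G] [TopologicalSpace G]
    [IsTopologicalGroup G] (d : G → G → ℝ)
    (hpm : (∀ x, d x x = 0) ∧ (∀ x y, d x y = d y x) ∧ ∀ x y z, d x z ≤ d x y + d y z)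
    (hbdd : ∃ C : ℝ, ∀ x y, d x y ≤ C) :
    (∀ ε : ℝ, 0 < ε → ∃ V ∈ 𝓝 (1 : G), ∀ x x' y y' : G,
        x * x'⁻¹ ∈ V → y * y'⁻¹ ∈ V → |d x y - d x' y'| ≤ ε) ↔
      ∃ d' : G → G → ℝ, IsRICPseudometric G d' ∧ ∀ x y, d x y ≤ d' x y := by
  obtain ⟨hrefl, hsymm, htri⟩ := hpm
  obtain ⟨C, hC⟩ := hbdd
  refine ⟨fun hd => ?_, fun ⟨d', hd', hle⟩ => rightUniformContinuous₂_of_le hsymm htri hd' hle⟩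
  exact ⟨rightInvariantSup d,
    RightUniformContinuous₂.isRICPseudometric_rightInvariantSup hd hrefl hsymm htri hC,
    le_rightInvariantSup_self hC⟩
end

section
/- Let G be a discrete group. Then the topological centre and the CBP measurable centre of the semigroup βG (the Čech–Stone compactification of G with the extended semigroup operation) both equal G. -/
open Topology Filter Set

attribute [local instance] Ultrafilter.mul Ultrafilter.semigroup

/-!
Translation by `g ∈ G` is `Ultrafilter.map (g * ·)`, hence continuous, and when `q ↦ p * q` is
continuous so is `q ↦ lim_{p*q} f = lim_p lim_q f(xy)`; this gives `G ⊆ Z_t ⊆ Z_CBP`.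

For the converse let `p` be nonprincipal. Index the finite subsets of `G`, each `|G|` times, by
the initial ordinal `ι` of `|G|`, say `D : ι → Set G`, and choose `z : ι → G` by transfinite
recursion so sparse that, with `A = ⋃ σ, D σ * {z σ}`, for every `x` we have
`x * z σ ∈ A ↔ x ∈ D σ` for all but finitely many `σ`. Then for every nonprincipal ultrafilter
`u` on `ι`, `A ∈ p * u.map z` iff `readPattern D u ∈ p.cubeSet = {χ | χ⁻¹(true) ∈ p}`, where
`readPattern D u x = [{σ | x ∈ D σ} ∈ u]` maps the nonprincipal ultrafilters onto the Cantor
cube `2^G`. Restricted to a minimal closed set mapping onto the cube (Gleason) this map is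
irreducible, and irreducible maps reflect the Baire property. So CBP measurability at `p` would
give `p.cubeSet` the Baire property; but this set is invariant under finite changes, hence
meagre or comeagre, and the flip `χ ↦ ¬χ` exchanges it with its complement (Sierpiński).
-/

theorem IsOpen.hasBP {X : Type*} [TopologicalSpace X] {A : Set X} (hA : IsOpen A) : HasBP A :=
  ⟨A, hA, by simpa using IsMeagre.empty⟩

theorem Continuous.cbpMeasurable {X : Type u} {Y : Type*} [TopologicalSpace X]
    [TopologicalSpace Y] {f : X → Y} (hf : Continuous f) : CBPMeasurable f :=
  fun _U hU _K _ _ _ _φ hφ => ((hU.preimage hf).preimage hφ).hasBP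

section UltrafilterLimits

variable {α X : Type*} [TopologicalSpace X]

theorem Ultrafilter.continuous_map {β : Type*} (m : α → β) : Continuous (Ultrafilter.map m) :=
  ultrafilterBasis_is_basis.continuous_iff.2 <| Set.forall_mem_range.mpr fun s =>
    ultrafilter_isOpen_basic (m ⁻¹' s)

theorem Ultrafilter.continuous_pure_mul [Mul α] (g : α) :
    Continuous fun q : Ultrafilter α => pure g * q :=
  ultrafilterBasis_is_basis.continuous_iff.2 <| Set.forall_mem_range.mpr fun s =>
    ultrafilter_isOpen_basic {y | g * y ∈ s}

theorem tendsto_of_forall_tendsto_mul [RegularSpace X] [Mul α] {p q : Ultrafilter α}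
    {f g : α → X} {a : X} (hf : Tendsto f (p * q : Ultrafilter α) (𝓝 a))
    (hg : ∀ x, Tendsto (fun y => f (x * y)) q (𝓝 (g x))) : Tendsto g p (𝓝 a) :=
  (closed_nhds_basis a).tendsto_right_iff.2 fun _s ⟨hs, hsc⟩ =>
    (Ultrafilter.eventually_mul p q _).1 (hf hs) |>.mono fun x hx => hsc.mem_of_tendsto (hg x) hx

theorem one_half_lt_limUnder_indicator_iff (r : Ultrafilter α) (A : Set α) :
    1 / 2 < limUnder (r : Filter α) (A.indicator (1 : α → ℝ)) ↔ A ∈ r := by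
  have hlim (c : ℝ) (hc : ∀ᶠ x in r, A.indicator 1 x = c) :
      limUnder (r : Filter α) (A.indicator (1 : α → ℝ)) = c :=
    (tendsto_const_nhds.congr' (hc.mono fun _ h => h.symm)).limUnder_eq
  by_cases h : A ∈ r
  · rw [hlim 1 (eventually_of_mem h fun _ hx => indicator_of_mem hx _)]
    norm_num [h]
  · rw [hlim 0 (eventually_of_mem (Ultrafilter.compl_mem_iff_notMem.2 h) fun _ hx =>
      indicator_of_notMem hx _)]
    norm_num [h]

variable [Nonempty X] {K : Set X} {f : α → X}

theorem tendsto_limUnder_of_isCompact (hK : IsCompact K) (hf : ∀ x, f x ∈ K)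
    (r : Ultrafilter α) : Tendsto f r (𝓝 (limUnder (r : Filter α) f)) := by
  obtain ⟨c, -, hc⟩ :=
    hK.ultrafilter_le_nhds (r.map f) (le_principal_iff.2 (show f ⁻¹' K ∈ r from univ_mem' hf))
  exact tendsto_nhds_limUnder ⟨c, hc⟩

variable [T2Space X]

theorem continuous_limUnder_of_isCompact (hK : IsCompact K) (hf : ∀ x, f x ∈ K) :
    Continuous fun r : Ultrafilter α => limUnder (r : Filter α) f := by
  have : CompactSpace K := isCompact_iff_compactSpace.1 hK
  have hlim (r : Ultrafilter α) :
      limUnder (r : Filter α) f = Ultrafilter.extend (K.codRestrict f hf) r :=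
    (show Tendsto f r (𝓝 _) from (continuous_subtype_val.tendsto _).comp
      ((ultrafilter_extend_eq_iff (f := K.codRestrict f hf)).1 rfl)).limUnder_eq
  simp_rw [hlim]
  exact continuous_subtype_val.comp (continuous_ultrafilter_extend _)

theorem limUnder_limUnder_mul [RegularSpace X] [Mul α] (hK : IsCompact K) (hf : ∀ x, f x ∈ K)
    (p q : Ultrafilter α) :
    limUnder (p : Filter α) (fun x => limUnder (q : Filter α) fun y => f (x * y)) =
      limUnder ((p * q : Ultrafilter α) : Filter α) f :=
  (tendsto_of_forall_tendsto_mul (tendsto_limUnder_of_isCompact hK hf _) fun x =>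
    tendsto_limUnder_of_isCompact hK (fun y => hf (x * y)) q).limUnder_eq

end UltrafilterLimits

section CantorCube

/-! The cube `I → Bool` is a compact topological group under `+ = xor`: translating by `b` flips
the coordinates where `b` is `true`. -/

variable {I : Type*}

def Ultrafilter.cubeSet (p : Ultrafilter I) : Set (I → Bool) := {χ | {x | χ x = true} ∈ p}

theorem IsMeagre.preimage_add_left {M : Set (I → Bool)} (hM : IsMeagre M) (b : I → Bool) :
    IsMeagre ((b + ·) ⁻¹' M) :=
  hM.preimage_of_isOpenMap (continuous_const_add b) (Homeomorph.addLeft b).isOpenMap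

theorem exists_finset_cylinder_subset {U : Set (I → Bool)} {χ₀ : I → Bool} (hU : U ∈ 𝓝 χ₀) :
    ∃ F : Finset I, {χ | ∀ x ∈ F, χ x = χ₀ x} ⊆ U := by
  rw [nhds_pi, mem_pi'] at hU
  obtain ⟨F, t, ht, hFt⟩ := hU
  exact ⟨F, fun χ hχ => hFt fun x hx => hχ x hx ▸ mem_of_mem_nhds (ht x)⟩

theorem isMeagre_or_isMeagre_compl_of_hasBP {P : Set (I → Bool)} (hBP : HasBP P)
    (hP : ∀ b : I → Bool, {x | b x = true}.Finite → (b + ·) ⁻¹' P = P) :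
    IsMeagre P ∨ IsMeagre Pᶜ := by
  obtain ⟨U, hU, hM⟩ := hBP
  rcases U.eq_empty_or_nonempty with rfl | ⟨χ₀, hχ₀⟩
  · left
    rwa [← bot_eq_empty, symmDiff_bot] at hM
  right
  obtain ⟨F, hF⟩ := exists_finset_cylinder_subset (hU.mem_nhds hχ₀)
  set C := {χ : I → Bool | ∀ x ∈ F, χ x = χ₀ x}
  have hCP : IsMeagre (C \ P) := hM.mono fun χ hχ => Or.inr ⟨hF hχ.1, hχ.2⟩
  classical
  have hcover : Pᶜ ⊆ ⋃ S ∈ F.powerset,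
      ((fun x => decide (x ∈ S)) + ·) ⁻¹' (C \ P) := by
    intro χ hχ
    let S := F.filter fun x : I => χ x ≠ χ₀ x
    have hS : {x | decide (x ∈ S) = true}.Finite := by simp [S.finite_toSet]
    refine mem_biUnion (x := S) (Finset.mem_powerset.2 (Finset.filter_subset _ F)) ⟨?_, ?_⟩
    · intro x hx
      have key : ∀ a b : Bool, decide (a ≠ b) + a = b := by decide
      simpa [S, hx] using key (χ x) (χ₀ x)
    · rwa [← mem_preimage, hP _ hS]
  exact (isMeagre_biUnion (Finset.countable_toSet _) fun S _ => hCP.preimage_add_left _).mono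
    hcover

variable {p : Ultrafilter I}

theorem Ultrafilter.preimage_add_cubeSet_of_finite (hp : (p : Filter I) ≤ cofinite)
    {b : I → Bool} (hb : {x | b x = true}.Finite) : (b + ·) ⁻¹' p.cubeSet = p.cubeSet := by
  ext χ
  refine congr_sets (hp (hb.subset fun x hx => ?_))
  by_contra hbx
  simp_all

theorem Ultrafilter.preimage_add_top_cubeSet :
    ((fun _ => true) + ·) ⁻¹' p.cubeSet = p.cubeSetᶜ := by
  ext χ
  simp only [cubeSet, mem_preimage, mem_compl_iff, mem_ofPred_eq,
    ← Ultrafilter.compl_mem_iff_notMem]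
  refine Iff.of_eq (congrArg (· ∈ p) (Set.ext fun x => ?_))
  simp only [mem_ofPred_eq, mem_compl_iff, Pi.add_apply]
  cases χ x <;> decide

theorem Ultrafilter.not_hasBP_cubeSet (hp : (p : Filter I) ≤ cofinite) : ¬ HasBP p.cubeSet := by
  intro hBP
  have hboth : IsMeagre p.cubeSet ∧ IsMeagre p.cubeSetᶜ := by
    have hflip := p.preimage_add_top_cubeSet
    rcases isMeagre_or_isMeagre_compl_of_hasBP hBP
      (fun _ => p.preimage_add_cubeSet_of_finite hp) with h | h
    · exact ⟨h, hflip ▸ h.preimage_add_left _⟩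
    · refine ⟨?_, h⟩
      simpa only [preimage_compl, hflip, compl_compl] using h.preimage_add_left fun _ => true
  exact not_isMeagre_of_isOpen isOpen_univ univ_nonempty
    (by simpa using hboth.1.union hboth.2)

end CantorCube

section IrreducibleMap

variable {Y Z : Type*} [TopologicalSpace Y] {f : Y → Z}

theorem exists_preimage_singleton_subset_of_image_ne_univ
    (hmin : ∀ E₀ : Set Y, E₀ ≠ univ → IsClosed E₀ → f '' E₀ ≠ univ) {U : Set Y} (hU : IsOpen U)
    (hne : U.Nonempty) : ∃ z, f ⁻¹' {z} ⊆ U := by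
  obtain ⟨z, hz⟩ :=
    (ne_univ_iff_exists_notMem _).1 (hmin Uᶜ (compl_ne_univ.2 hne) hU.isClosed_compl)
  exact ⟨z, fun y hy => by_contra fun hyU => hz ⟨y, hyU, hy⟩⟩

variable [TopologicalSpace Z] [CompactSpace Y] [T2Space Z] (hf : Continuous f)
  (hsurj : Function.Surjective f) (hmin : ∀ E₀ : Set Y, E₀ ≠ univ → IsClosed E₀ → f '' E₀ ≠ univ)
include hf hsurj hmin

theorem isNowhereDense_image_of_image_ne_univ {N : Set Y} (hN : IsNowhereDense N) :
    IsNowhereDense (f '' N) := by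
  refine IsNowhereDense.mono (image_mono subset_closure) ?_
  rw [(hf.isClosedMap _ isClosed_closure).isNowhereDense_iff, eq_empty_iff_forall_notMem]
  intro w hw
  set O := f ⁻¹' interior (f '' closure N) \ closure N
  have hO : O.Nonempty := by
    obtain ⟨y, rfl⟩ := hsurj w
    refine nonempty_iff_ne_empty.2 fun hO => ?_
    have : f ⁻¹' interior (f '' closure N) ⊆ interior (closure N) :=
      interior_maximal (sdiff_eq_empty.1 hO) (isOpen_interior.preimage hf)
    exact (hN ▸ this) hw
  obtain ⟨z, hz⟩ := exists_preimage_singleton_subset_of_image_ne_univ hmin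
    ((isOpen_interior.preimage hf).sdiff isClosed_closure) hO
  obtain ⟨y, rfl⟩ := hsurj z
  obtain ⟨y', hy', hyy'⟩ := interior_subset (hz rfl).1
  exact (hz hyy').2 hy'

theorem isMeagre_image_of_image_ne_univ {M : Set Y} (hM : IsMeagre M) : IsMeagre (f '' M) := by
  obtain ⟨S, hS, hSc, hMS⟩ := isMeagre_iff_countable_union_isNowhereDense.1 hM
  refine (isMeagre_biUnion hSc fun t ht =>
    (isNowhereDense_image_of_image_ne_univ hf hsurj hmin (hS t ht)).isMeagre).mono ?_
  rw [← image_iUnion₂, ← sUnion_eq_biUnion]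
  exact image_mono hMS

theorem isNowhereDense_diff_preimage_compl_image_compl {U : Set Y} (hU : IsOpen U) :
    IsNowhereDense (U \ f ⁻¹' (f '' Uᶜ)ᶜ) := by
  have hF : IsClosed (f ⁻¹' (f '' Uᶜ) ∩ closure U) :=
    ((hf.isClosedMap _ hU.isClosed_compl).preimage hf).inter isClosed_closure
  refine IsNowhereDense.mono (s := f ⁻¹' (f '' Uᶜ) ∩ closure U)
    (fun y hy => ⟨not_not.1 hy.2, subset_closure hy.1⟩) ?_
  rw [hF.isNowhereDense_iff, eq_empty_iff_forall_notMem]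
  intro y hy
  obtain ⟨z, hz⟩ := exists_preimage_singleton_subset_of_image_ne_univ hmin
    (isOpen_interior.inter hU) (mem_closure_iff.1 (interior_subset hy).2 _ isOpen_interior hy)
  obtain ⟨y₀, rfl⟩ := hsurj z
  obtain ⟨y₁, hy₁, hy₀₁⟩ := (interior_subset (hz rfl).1).1
  exact hy₁ (hz hy₀₁).2

/-- The Baire property descends along an irreducible map: `f ⁻¹' P =ᵇ U` gives `P =ᵇ V` for
`V = (f '' Uᶜ)ᶜ`, the set of points whose whole fibre lies in `U`. -/
theorem HasBP.of_preimage_of_image_ne_univ {P : Set Z} (hP : HasBP (f ⁻¹' P)) : HasBP P := by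
  obtain ⟨U, hU, hM⟩ := hP
  refine ⟨(f '' Uᶜ)ᶜ, (hf.isClosedMap _ hU.isClosed_compl).isOpen_compl, ?_⟩
  have hVU : f ⁻¹' (f '' Uᶜ)ᶜ ⊆ U := fun y hy => by_contra fun hyU => hy ⟨y, hyU, rfl⟩
  have hpre : IsMeagre (f ⁻¹' symmDiff P (f '' Uᶜ)ᶜ) := by
    refine (hM.union
      (isNowhereDense_diff_preimage_compl_image_compl hf hsurj hmin hU).isMeagre).mono ?_
    rw [preimage_symmDiff]
    refine (symmDiff_triangle _ U _).trans (union_subset_union_right _ ?_)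
    rw [symmDiff_of_ge hVU]
  rw [← image_preimage_eq (symmDiff P _) hsurj]
  exact isMeagre_image_of_image_ne_univ hf hsurj hmin hpre

end IrreducibleMap

section NonprincipalUltrafilters

variable {α : Type*}

theorem isClosed_setOf_le_cofinite :
    IsClosed {u : Ultrafilter α | (u : Filter α) ≤ cofinite} := by
  simp_rw [le_cofinite_iff_compl_singleton_mem, ofPred_forall]
  exact isClosed_iInter fun a => ultrafilter_isClosed_basic _

theorem exists_ultrafilter_le_cofinite_forall_mem {ι : Type*} [Nonempty ι] {s : ι → Set α}
    (hdir : Directed (· ⊇ ·) s) (hinf : ∀ i, (s i).Infinite) :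
    ∃ u : Ultrafilter α, (u : Filter α) ≤ cofinite ∧ ∀ i, s i ∈ u := by
  have : (⨅ i, cofinite ⊓ 𝓟 (s i)).NeBot := by
    refine iInf_neBot_of_directed' (fun i j => ?_) fun i =>
      (hinf i).cofinite_inf_principal_neBot
    obtain ⟨k, hik, hjk⟩ := hdir i j
    exact ⟨k, inf_le_inf_left _ (principal_mono.2 hik), inf_le_inf_left _ (principal_mono.2 hjk)⟩
  let u := Ultrafilter.of (⨅ i, cofinite ⊓ 𝓟 (s i))
  have hu (i : ι) : (u : Filter α) ≤ cofinite ⊓ 𝓟 (s i) :=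
    (Ultrafilter.of_le _).trans (iInf_le _ i)
  exact ⟨u, (hu (Classical.arbitrary ι)).trans inf_le_left, fun i =>
    le_principal_iff.1 ((hu i).trans inf_le_right)⟩

end NonprincipalUltrafilters

section Patterns

variable {G ι : Type*} (D : ι → Set G)

noncomputable def readPattern (u : Ultrafilter ι) : G → Bool := fun x =>
  {v : Ultrafilter ι | {i | x ∈ D i} ∈ v}.boolIndicator u

theorem readPattern_eq_true_iff {u : Ultrafilter ι} {x : G} :
    readPattern D u x = true ↔ {i | x ∈ D i} ∈ u :=
  (mem_iff_boolIndicator _ _).symm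

theorem continuous_readPattern : Continuous (readPattern D) :=
  continuous_pi fun _ => (continuous_boolIndicator_iff_isClopen _).2
    ⟨ultrafilter_isClosed_basic _, ultrafilter_isOpen_basic _⟩

variable {D}

theorem exists_readPattern_eq
    (hD : ∀ (χ : G → Bool) (F : Finset G), {i | ∀ x ∈ F, x ∈ D i ↔ χ x = true}.Infinite)
    (χ : G → Bool) : ∃ u : Ultrafilter ι, (u : Filter ι) ≤ cofinite ∧ readPattern D u = χ := by
  classical
  obtain ⟨u, hu, hmem⟩ := exists_ultrafilter_le_cofinite_forall_mem
    (s := fun F : Finset G => {i | ∀ x ∈ F, x ∈ D i ↔ χ x = true})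
    (fun F F' => ⟨F ∪ F', fun i hi x hx => hi x (Finset.mem_union_left _ hx),
      fun i hi x hx => hi x (Finset.mem_union_right _ hx)⟩) (hD χ)
  refine ⟨u, hu, funext fun x => Bool.eq_iff_iff.2 ((readPattern_eq_true_iff D).trans ?_)⟩
  have hx : {i | x ∈ D i ↔ χ x = true} ∈ u := by simpa using hmem {x}
  cases h : χ x
  · simp only [h, Bool.false_eq_true, iff_false] at hx ⊢
    exact Ultrafilter.compl_mem_iff_notMem.1 hx
  · simpa [h] using hx

end Patterns

open Cardinal in
theorem exists_finite_patterns {G ι : Type u} [Infinite G] (hι : #ι = #G) :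
    ∃ D : ι → Set G, (∀ i, (D i).Finite) ∧
      ∀ (χ : G → Bool) (F : Finset G), {i | ∀ x ∈ F, x ∈ D i ↔ χ x = true}.Infinite := by
  classical
  obtain ⟨e⟩ : Nonempty (ι ≃ Finset G × G) := Cardinal.eq.1 <| by
    rw [hι, mk_prod, mk_finset_of_infinite, lift_id, mul_eq_self (aleph0_le_mk G)]
  refine ⟨fun i => (e i).1, fun i => (e i).1.finite_toSet, fun χ F => ?_⟩
  refine infinite_of_injective_forall_mem (f := fun g => e.symm (F.filter (χ · = true), g))
    (fun g g' h => by simpa using h) fun g x hx => ?_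
  simp [hx]

open Cardinal in
theorem mk_biUnion_lt_of_finite {α β : Type u} {s : Set α} {F : α → Set β} {c : Cardinal.{u}}
    (hc : ℵ₀ ≤ c) (hs : #s < c) (hF : ∀ a, (F a).Finite) : #(⋃ a ∈ s, F a) < c := by
  rcases s.finite_or_infinite with hfin | hinf
  · exact ((hfin.biUnion fun a _ => hF a).lt_aleph0).trans_le hc
  · calc #(⋃ a ∈ s, F a) ≤ #s * ⨆ a : s, #(F a) := mk_biUnion_le F s
      _ ≤ #s * ℵ₀ := by gcongr; exact ciSup_le' fun a => (hF a).lt_aleph0.le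
      _ = #s := mul_aleph0_eq (infinite_iff.1 hinf.to_subtype)
      _ < c := hs

theorem exists_forall_notMem_of_ne_univ {ι α : Type*} [LinearOrder ι] [WellFoundedLT ι]
    [Nonempty α] (bad : ι → (ι → α) → Set α)
    (hloc : ∀ i z z', EqOn z z' (Iio i) → bad i z = bad i z') (hbad : ∀ i z, bad i z ≠ univ) :
    ∃ z : ι → α, ∀ i, z i ∉ bad i z := by
  classical
  let extend (i : ι) (w : ∀ j, j < i → α) : ι → α := fun j =>
    if h : j < i then w j h else Classical.arbitrary α
  let step (i : ι) (w : ∀ j, j < i → α) : α :=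
    ((ne_univ_iff_exists_notMem _).1 (hbad i (extend i w))).choose
  let z : ι → α := wellFounded_lt.fix step
  refine ⟨z, fun i => ?_⟩
  rw [show z i = step i (fun j _ => z j) from wellFounded_lt.fix_eq step i,
    ← hloc i (extend i fun j _ => z j) z fun j hj => dif_pos hj]
  exact ((ne_univ_iff_exists_notMem _).1 (hbad i _)).choose_spec

section Coding

open Cardinal Pointwise

variable {G : Type u} [Group G] {ι : Type u} (D : ι → Set G) (z : ι → G)

def blockSet (s : Set ι) : Set G := ⋃ τ ∈ s, D τ * {z τ}

def codeSet : Set G := blockSet D z univ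

def wordSet (s : Set ι) : Set G := blockSet D z s / z '' s

variable {D z} in
theorem mul_div_mem_wordSet {s : Set ι} {σ τ : ι} {x : G} (hσ : σ ∈ s) (hτ : τ ∈ s)
    (hx : x ∈ D τ) : x * z τ / z σ ∈ wordSet D z s :=
  div_mem_div (mem_biUnion hτ (mul_mem_mul hx rfl)) (mem_image_of_mem z hσ)

variable [LinearOrder ι]

/-- Choosing `z ρ` outside this set makes `z` injective and ensures that no `x * z τ / z σ` with
`σ ≠ τ`, `x ∈ D τ` and `max σ τ = ρ` is already a word over the indices below `ρ`. -/
def forbiddenSet (ρ : ι) : Set G :=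
  z '' Iio ρ ∪ (wordSet D z (Iio ρ))⁻¹ * blockSet D z (Iio ρ) ∪
    (D ρ)⁻¹ * wordSet D z (Iio ρ) * z '' Iio ρ

variable {D z}

theorem forbiddenSet_congr {z' : ι → G} {ρ : ι} (h : EqOn z z' (Iio ρ)) :
    forbiddenSet D z ρ = forbiddenSet D z' ρ := by
  have hB : blockSet D z (Iio ρ) = blockSet D z' (Iio ρ) :=
    iUnion₂_congr fun τ hτ => by rw [h hτ]
  simp only [forbiddenSet, wordSet, hB, h.image_eq]

theorem mk_forbiddenSet_lt (hG : ℵ₀ ≤ #G) (hD : ∀ i, (D i).Finite) {ρ : ι}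
    (hρ : #(Iio ρ) < #G) : #(forbiddenSet D z ρ) < #G := by
  have hZ : #(z '' Iio ρ) < #G := mk_image_le.trans_lt hρ
  have hB : #(blockSet D z (Iio ρ)) < #G :=
    mk_biUnion_lt_of_finite hG hρ fun τ => (hD τ).mul (finite_singleton _)
  have hW : #(wordSet D z (Iio ρ)) < #G := mk_div_le.trans_lt (mul_lt_of_lt hG hB hZ)
  have hDρ : #↥((D ρ)⁻¹) < #G := by rw [mk_inv]; exact (hD ρ).lt_aleph0.trans_le hG
  refine (mk_union_le _ _).trans_lt (add_lt_of_lt hG ((mk_union_le _ _).trans_lt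
    (add_lt_of_lt hG hZ ?_)) ?_)
  · exact mk_mul_le.trans_lt (mul_lt_of_lt hG (by rwa [mk_inv]) hB)
  · exact mk_mul_le.trans_lt (mul_lt_of_lt hG (mk_mul_le.trans_lt (mul_lt_of_lt hG hDρ hW)) hZ)

section Forbidden

variable (hz : ∀ ρ, z ρ ∉ forbiddenSet D z ρ)
include hz

theorem injective_of_notMem_forbiddenSet : Function.Injective z := by
  intro σ τ heq
  by_contra hne
  rcases Ne.lt_or_gt hne with h | h
  · exact hz τ (Or.inl (Or.inl ⟨σ, h, heq⟩))
  · exact hz σ (Or.inl (Or.inl ⟨τ, h, heq.symm⟩))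

theorem mul_div_notMem_wordSet_max {σ τ : ι} {x : G} (hστ : σ ≠ τ) (hx : x ∈ D τ) :
    x * z τ / z σ ∉ wordSet D z (Iio (max σ τ)) := by
  intro hw
  rcases hστ.lt_or_gt with h | h
  · rw [max_eq_right h.le] at hw
    refine hz τ (Or.inr ⟨_, mul_mem_mul (inv_mem_inv.2 hx) hw, z σ, mem_image_of_mem z h, ?_⟩)
    simp [div_eq_mul_inv, mul_assoc]
  · rw [max_eq_left h.le] at hw
    refine hz σ (Or.inl (Or.inr ⟨_, inv_mem_inv.2 hw, x * z τ,
      mem_biUnion h (mul_mem_mul hx rfl), ?_⟩))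
    simp [div_eq_mul_inv, mul_assoc]

theorem max_eq_max_of_mul_div_eq {σ τ σ' τ' : ι} {x x' : G} (hστ : σ ≠ τ) (hx : x ∈ D τ)
    (hστ' : σ' ≠ τ') (hx' : x' ∈ D τ') (heq : x * z τ / z σ = x' * z τ' / z σ') :
    max σ τ = max σ' τ' := by
  have key : ∀ {σ τ σ' τ' : ι} {x x' : G}, σ' ≠ τ' → x ∈ D τ → x' ∈ D τ' →
      x * z τ / z σ = x' * z τ' / z σ' → ¬ max σ τ < max σ' τ' :=
    fun hστ' hx hx' heq hlt => mul_div_notMem_wordSet_max hz hστ' hx' (heq ▸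
      mul_div_mem_wordSet ((le_max_left _ _).trans_lt hlt) ((le_max_right _ _).trans_lt hlt) hx)
  rcases lt_trichotomy (max σ τ) (max σ' τ') with h | h | h
  · exact absurd h (key hστ' hx hx' heq)
  · exact h
  · exact absurd h (key hστ hx' hx heq.symm)

theorem finite_setOf_mul_div_eq (hD : ∀ i, (D i).Finite) (v : G) :
    {σ | ∃ τ, σ ≠ τ ∧ ∃ x ∈ D τ, x * z τ / z σ = v}.Finite := by
  rcases eq_empty_or_nonempty {σ | ∃ τ, σ ≠ τ ∧ ∃ x ∈ D τ, x * z τ / z σ = v} with h | h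
  · rw [h]
    exact finite_empty
  obtain ⟨σ₀, τ₀, hστ₀, x₀, hx₀, hv₀⟩ := h
  set ρ := max σ₀ τ₀
  refine ((((hD ρ).image fun x => v⁻¹ * (x * z ρ)).preimage
    (injective_of_notMem_forbiddenSet hz).injOn).insert ρ).subset ?_
  rintro σ ⟨τ, hστ, x, hx, rfl⟩
  have hmax : max σ τ = ρ := max_eq_max_of_mul_div_eq hz hστ hx hστ₀ hx₀ hv₀.symm
  rcases max_choice σ τ with h | h
  · exact Or.inl (h ▸ hmax)
  · have hτ : τ = ρ := h ▸ hmax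
    refine Or.inr ⟨x, hτ ▸ hx, ?_⟩
    rw [← hτ]
    simp [div_eq_mul_inv, mul_assoc]

theorem codeSet_eventuallyEq (hD : ∀ i, (D i).Finite) (x : G) :
    {σ | x * z σ ∈ codeSet D z} =ᶠ[cofinite] {σ | x ∈ D σ} := by
  refine eventuallyEq_set.2 (eventually_cofinite.2 ((finite_setOf_mul_div_eq hz hD x).subset ?_))
  intro σ hσ
  have hmem : x * z σ ∈ codeSet D z := by
    by_contra h
    exact hσ (iff_of_false h fun hx => h (mem_biUnion (mem_univ σ) (mul_mem_mul hx rfl)))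
  have hxσ : x ∉ D σ := fun hx => hσ (iff_of_true hmem hx)
  obtain ⟨τ, -, x', hx', _, rfl, heq⟩ := mem_iUnion₂.1 hmem
  refine ⟨τ, ?_, x', hx', ?_⟩
  · rintro rfl
    exact hxσ (mul_right_cancel heq ▸ hx')
  · rw [show x' * z τ = x * z σ from heq]
    simp

end Forbidden

theorem exists_codeSet_eventuallyEq [WellFoundedLT ι] [Infinite G] (hD : ∀ i, (D i).Finite)
    (hι : ∀ i : ι, #(Iio i) < #G) :
    ∃ z : ι → G, ∀ x, {σ | x * z σ ∈ codeSet D z} =ᶠ[cofinite] {σ | x ∈ D σ} := by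
  obtain ⟨z, hz⟩ := exists_forall_notMem_of_ne_univ (fun ρ z => forbiddenSet D z ρ)
    (fun _ _ _ h => forbiddenSet_congr h) fun i z h =>
      (mk_forbiddenSet_lt (aleph0_le_mk G) hD (hι i)).ne (by rw [h, mk_univ])
  exact ⟨z, codeSet_eventuallyEq hz hD⟩

end Coding

section Centres

open Cardinal

variable {G : Type u} {p : Ultrafilter G}

theorem isCBP_setOf_mem_mul [Mul G]
    (hp : ∀ f : G → ℝ, (∃ C : ℝ, ∀ x, |f x| ≤ C) →
      CBPMeasurable fun q : Ultrafilter G =>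
        limUnder (p : Filter G) (fun x => limUnder (q : Filter G) (fun y => f (x * y))))
    (A : Set G) : IsCBP {q : Ultrafilter G | A ∈ p * q} := by
  have hA (x : G) : A.indicator 1 x ∈ Icc (0 : ℝ) 1 := by
    by_cases hx : x ∈ A <;> simp [hx]
  convert hp (A.indicator 1) ⟨1, fun x => abs_le.2 ⟨by linarith [(hA x).1], (hA x).2⟩⟩
    (Ioi (1 / 2)) isOpen_Ioi using 1
  ext q
  rw [mem_preimage, limUnder_limUnder_mul isCompact_Icc hA, mem_Ioi,
    one_half_lt_limUnder_indicator_iff]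
  rfl

theorem cbpMeasurable_limUnder_limUnder_of_continuous [Mul G] (hp : Continuous fun q => p * q)
    {f : G → ℝ} (hf : ∃ C : ℝ, ∀ x, |f x| ≤ C) :
    CBPMeasurable fun q : Ultrafilter G =>
      limUnder (p : Filter G) (fun x => limUnder (q : Filter G) (fun y => f (x * y))) := by
  obtain ⟨C, hC⟩ := hf
  have hfC (x : G) : f x ∈ Icc (-C) C := abs_le.1 (hC x)
  simp_rw [limUnder_limUnder_mul isCompact_Icc hfC]
  exact ((continuous_limUnder_of_isCompact isCompact_Icc hfC).comp hp).cbpMeasurable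

theorem mem_mul_map_iff_readPattern_mem_cubeSet [Mul G] {ι : Type*} {D : ι → Set G}
    {z : ι → G} {A : Set G} (hz : ∀ x, {σ | x * z σ ∈ A} =ᶠ[cofinite] {σ | x ∈ D σ})
    {u : Ultrafilter ι} (hu : (u : Filter ι) ≤ cofinite) :
    A ∈ p * u.map z ↔ readPattern D u ∈ p.cubeSet :=
  Iff.of_eq <| congrArg (· ∈ p) <| Set.ext fun x =>
    (congr_sets (hu (hz x).mem_iff)).trans (readPattern_eq_true_iff D).symm

theorem mem_range_pure_of_forall_isCBP [Group G]
    (hp : ∀ A : Set G, IsCBP {q : Ultrafilter G | A ∈ p * q}) :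
    p ∈ range pure := by
  by_contra hpure
  have hcof : (p : Filter G) ≤ cofinite :=
    p.le_cofinite_or_eq_pure.resolve_right fun ⟨g, hg⟩ => hpure ⟨g, hg.symm⟩
  have : Infinite G := not_finite_iff_infinite.1 fun _ =>
    p.neBot.ne (le_bot_iff.1 (cofinite_eq_bot (α := G) ▸ hcof))
  obtain ⟨D, hD, hpat⟩ := exists_finite_patterns (ι := (#G).ord.ToType) (mk_ord_toType _)
  obtain ⟨z, hz⟩ := exists_codeSet_eventuallyEq hD fun i => by simpa using mk_Iio_lt i
  let N := {u : Ultrafilter (#G).ord.ToType | (u : Filter (#G).ord.ToType) ≤ cofinite}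
  have : CompactSpace N := isCompact_iff_compactSpace.1 isClosed_setOf_le_cofinite.isCompact
  let r : N → G → Bool := fun u => readPattern D u
  have hr : Continuous r := (continuous_readPattern D).comp continuous_subtype_val
  have hrs : Function.Surjective r := fun χ =>
    let ⟨u, hu, hχ⟩ := exists_readPattern_eq hpat χ
    ⟨⟨u, hu⟩, hχ⟩
  obtain ⟨E, hE, hrE, hmin⟩ := exists_compact_surjective_zorn_subset hr hrs
  let φ : E → Ultrafilter G := fun u => Ultrafilter.map z u.1.1
  have hφ : Continuous φ := (Ultrafilter.continuous_map z).comp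
    (continuous_subtype_val.comp continuous_subtype_val)
  have hpre : φ ⁻¹' {q | codeSet D z ∈ p * q} = E.domRestrict r ⁻¹' p.cubeSet :=
    Set.ext fun u => mem_mul_map_iff_readPattern_mem_cubeSet hz u.1.2
  exact p.not_hasBP_cubeSet hcof <| HasBP.of_preimage_of_image_ne_univ
    (hr.comp continuous_subtype_val) (range_eq_univ.1 ((range_domRestrict r E).trans hrE)) hmin
    (hpre ▸ hp _ E φ hφ)

end Centres

/-- for a discrete group `G`, the topological centre and the CBP measurable
centre of the Čech–Stone compactification `βG` (realised as the space of ultrafilters on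
`G`, with the extended semigroup operation) both equal (the canonical copy of) `G`. -/
theorem stoneCech_centres_eq_G (G : Type u) [Group G] :
    {p : Ultrafilter G | Continuous fun q : Ultrafilter G => p * q} =
        Set.range (pure : G → Ultrafilter G) ∧
      {p : Ultrafilter G | ∀ f : G → ℝ, (∃ C : ℝ, ∀ x, |f x| ≤ C) →
          CBPMeasurable fun q : Ultrafilter G =>
            limUnder (p : Filter G)
              (fun x => limUnder (q : Filter G) (fun y => f (x * y)))} =
        Set.range (pure : G → Ultrafilter G) := by
  have hpure : ∀ g : G, Continuous fun q : Ultrafilter G => pure g * q :=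
    Ultrafilter.continuous_pure_mul
  have hcbp : ∀ p : Ultrafilter G, (Continuous fun q : Ultrafilter G => p * q) →
      ∀ f : G → ℝ, (∃ C : ℝ, ∀ x, |f x| ≤ C) → CBPMeasurable fun q : Ultrafilter G =>
        limUnder (p : Filter G) (fun x => limUnder (q : Filter G) (fun y => f (x * y))) :=
    fun _ hp _ => cbpMeasurable_limUnder_limUnder_of_continuous hp
  refine ⟨Subset.antisymm (fun p hp => ?_) ?_, Subset.antisymm (fun p hp => ?_) ?_⟩
  · exact mem_range_pure_of_forall_isCBP (isCBP_setOf_mem_mul (hcbp p hp))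
  · rintro _ ⟨g, rfl⟩
    exact hpure g
  · exact mem_range_pure_of_forall_isCBP (isCBP_setOf_mem_mul hp)
  · rintro _ ⟨g, rfl⟩
    exact hcbp _ (hpure g)
end
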